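/- Let Δ be a simplicial complex on [m] and Γ a simplicial complex on N = {m+1,…,m+n}, and let Δ ⊔ Γ be the simplicial complex on [m+n] whose faces are the faces of Δ together with the faces of Γ. Under the natural identification ℝ^((Δ⊔Γ)‾) ≅ ℝ^Δ̄ × ℝ^Γ̄, one has GCut(Δ ⊔ Γ) = GCut(Δ) × GCut(Γ). Consequently, if GCut(Δ) = {x : A x ≤ a} and GCut(Γ) = {y : B y ≤ b} for matrices A, B and vectors a, b, then GCut(Δ ⊔ Γ) = {(x,y) : A x ≤ a and B y ≤ b}. -/

import Mathlib

open Finset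

/-- The index type of the nonempty faces of a simplicial complex `Δ` on a finite ground
set `α`. -/
abbrev FaceIdx {α : Type} [DecidableEq α] (Δ : Finset (Finset α)) : Type :=
  {F : Finset α // F ∈ Δ ∧ F.Nonempty}

/-- The vertex `d^S` of the generalized cut polytope. -/
noncomputable def dvec {α : Type} [DecidableEq α] (Δ : Finset (Finset α)) (S : Finset α) :
    FaceIdx Δ → ℝ :=
  fun F => if Odd ((F.val ∩ S).card) then 1 else 0

/-!
The vertex of `GCut(Δ ⊔ Γ)` for `S ⊔ T` is the pair `(d_Δ^S, d_Γ^T)`, so the vertex set of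
`GCut(Δ ⊔ Γ)` is the product of the vertex sets of `GCut(Δ)` and `GCut(Γ)`. Gluing the two
blocks with `Sum.elim` is a linear isomorphism, and the convex hull of a product is the
product of the convex hulls.
-/

theorem convexHull_image_sumElim_prod {𝕜 E α β : Type*} [Field 𝕜] [LinearOrder 𝕜]
    [IsStrictOrderedRing 𝕜] [AddCommGroup E] [Module 𝕜 E]
    (s : Set (α → E)) (t : Set (β → E)) :
    convexHull 𝕜 ((fun q : (α → E) × (β → E) => Sum.elim q.1 q.2) '' s ×ˢ t) =
      {p | p ∘ Sum.inl ∈ convexHull 𝕜 s ∧ p ∘ Sum.inr ∈ convexHull 𝕜 t} := by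
  let e := (LinearEquiv.sumArrowLequivProdArrow α β 𝕜 E).symm
  change convexHull 𝕜 (e.toLinearMap '' s ×ˢ t) = _
  rw [← LinearMap.image_convexHull, convexHull_prod, LinearEquiv.coe_toLinearMap,
    LinearEquiv.image_symm_eq_preimage]
  rfl

theorem setOf_exists_eq_sumElim {α β γ δ M : Type*} (f : γ → α → M) (g : δ → β → M) :
    {p | ∃ S T, p = Sum.elim (f S) (g T)} =
      (fun q : (α → M) × (β → M) => Sum.elim q.1 q.2) '' Set.range f ×ˢ Set.range g := by
  ext p
  constructor
  · rintro ⟨S, T, rfl⟩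
    exact ⟨(f S, g T), ⟨⟨S, rfl⟩, ⟨T, rfl⟩⟩, rfl⟩
  · rintro ⟨⟨_, _⟩, ⟨⟨S, rfl⟩, ⟨T, rfl⟩⟩, rfl⟩
    exact ⟨S, T, rfl⟩

theorem stmt_8_general (m n : ℕ) (Δ : Finset (Finset (Fin m))) (Γ : Finset (Finset (Fin n)))
    {ι κ : Type}
    (A : Matrix ι (FaceIdx Δ) ℝ) (a : ι → ℝ)
    (B : Matrix κ (FaceIdx Γ) ℝ) (b : κ → ℝ)
    (hA : convexHull ℝ (Set.range (dvec Δ)) = {x | ∀ i, A.mulVec x i ≤ a i})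
    (hB : convexHull ℝ (Set.range (dvec Γ)) = {y | ∀ j, B.mulVec y j ≤ b j}) :
    (convexHull ℝ {p : (FaceIdx Δ ⊕ FaceIdx Γ) → ℝ |
        ∃ S T, p = Sum.elim (dvec Δ S) (dvec Γ T)} =
      {p | (p ∘ Sum.inl) ∈ convexHull ℝ (Set.range (dvec Δ)) ∧
           (p ∘ Sum.inr) ∈ convexHull ℝ (Set.range (dvec Γ))}) ∧
    (convexHull ℝ {p : (FaceIdx Δ ⊕ FaceIdx Γ) → ℝ |
        ∃ S T, p = Sum.elim (dvec Δ S) (dvec Γ T)} =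
      {p | (∀ i, A.mulVec (p ∘ Sum.inl) i ≤ a i) ∧
           (∀ j, B.mulVec (p ∘ Sum.inr) j ≤ b j)}) := by
  have hprod : convexHull ℝ {p : (FaceIdx Δ ⊕ FaceIdx Γ) → ℝ |
        ∃ S T, p = Sum.elim (dvec Δ S) (dvec Γ T)} =
      {p | (p ∘ Sum.inl) ∈ convexHull ℝ (Set.range (dvec Δ)) ∧
           (p ∘ Sum.inr) ∈ convexHull ℝ (Set.range (dvec Γ))} := by
    rw [setOf_exists_eq_sumElim, convexHull_image_sumElim_prod]
  refine ⟨hprod, ?_⟩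
  rw [hprod, hA, hB]
  rfl

/-- under the natural identification `ℝ^((Δ⊔Γ)‾) ≅ ℝ^Δ̄ × ℝ^Γ̄`
(the nonempty faces of the disjoint union `Δ ⊔ Γ` are `Δ̄ ⊕ Γ̄`, and the vertex of
`GCut(Δ ⊔ Γ)` for the subset `S ⊔ T` is `Sum.elim (d_Δ^S) (d_Γ^T)`), one has
`GCut(Δ ⊔ Γ) = GCut(Δ) × GCut(Γ)`; consequently the H-representations combine blockwise. -/
theorem stmt_8 (m n : ℕ) (Δ : Finset (Finset (Fin m))) (Γ : Finset (Finset (Fin n)))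
    (hΔ : ∀ F ∈ Δ, ∀ G, G ⊆ F → G ∈ Δ) (hΓ : ∀ F ∈ Γ, ∀ G, G ⊆ F → G ∈ Γ)
    {ι κ : Type} [Fintype ι] [Fintype κ]
    (A : Matrix ι (FaceIdx Δ) ℝ) (a : ι → ℝ)
    (B : Matrix κ (FaceIdx Γ) ℝ) (b : κ → ℝ)
    (hA : convexHull ℝ (Set.range (dvec Δ)) = {x | ∀ i, A.mulVec x i ≤ a i})
    (hB : convexHull ℝ (Set.range (dvec Γ)) = {y | ∀ j, B.mulVec y j ≤ b j}) :
    (convexHull ℝ {p : (FaceIdx Δ ⊕ FaceIdx Γ) → ℝ |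
        ∃ S T, p = Sum.elim (dvec Δ S) (dvec Γ T)} =
      {p | (p ∘ Sum.inl) ∈ convexHull ℝ (Set.range (dvec Δ)) ∧
           (p ∘ Sum.inr) ∈ convexHull ℝ (Set.range (dvec Γ))}) ∧
    (convexHull ℝ {p : (FaceIdx Δ ⊕ FaceIdx Γ) → ℝ |
        ∃ S T, p = Sum.elim (dvec Δ S) (dvec Γ T)} =
      {p | (∀ i, A.mulVec (p ∘ Sum.inl) i ≤ a i) ∧
           (∀ j, B.mulVec (p ∘ Sum.inr) j ≤ b j)}) :=
  stmt_8_general m n Δ Γ A a B b hA hB
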